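/- Let k ≥ 1 and l ≥ 2 be integers. Let D' be a finite digraph in which every directed cycle has length at least (k−1)(l−1)+1 and every subset of at most 2 vertices is dominated. Define the digraph D on the same vertex set, with an arc v → w iff there is a directed walk in D' from v to w using at least 1 and at most l−1 arcs. Then D is a (k,l)-digraph: every directed cycle of D has length at least k, and every subset of at most l vertices of D is dominated in D. -/

import Mathlib

open Finset

/-- A digraph with arc relation `E` has a directed cycle of length `s ≥ 1`:
an injective `z : Fin s → V` with an arc from each `z t` to `z (t+1 mod s)`. -/
def HasCycleOfLength {V : Type*} (E : V → V → Prop) (s : ℕ) : Prop :=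
  ∃ z : Fin s → V, Function.Injective z ∧
    ∀ t : Fin s, E (z t) (z ⟨(t.1 + 1) % s, Nat.mod_lt _ t.pos⟩)

/-- There is a directed walk from `v` to `w` using exactly `t` arcs. -/
def HasWalk {V : Type*} (E : V → V → Prop) : ℕ → V → V → Prop
  | 0, v, w => v = w
  | t + 1, v, w => ∃ u, E v u ∧ HasWalk E t u w

/-!
A cycle of length `s` in the power `D` lifts, arc by arc, to a closed walk in `D'` of length
between `s` and `s (l - 1)`, and a closed walk of positive length contains a cycle no longer than
it; so `s ≤ k - 1` would give a cycle of `D'` shorter than `(k - 1)(l - 1) + 1`.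
For domination, induct on `|S|`: if `x'` reaches `S \ {v}` in at most `n` steps, a common
in-neighbour `x` of `x'` and `v` reaches `S` in at most `n + 1` steps.
-/

section

variable {V : Type*} {E : V → V → Prop}

def digraphPower (E : V → V → Prop) (n : ℕ) (v w : V) : Prop :=
  ∃ t, 1 ≤ t ∧ t ≤ n ∧ HasWalk E t v w

theorem HasWalk.append {a b : ℕ} {u v w : V} (huv : HasWalk E a u v) (hvw : HasWalk E b v w) :
    HasWalk E (a + b) u w := by
  induction a generalizing u with
  | zero => cases huv; simpa using hvw
  | succ a ih =>
    obtain ⟨x, hux, hxv⟩ := huv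
    rw [Nat.add_right_comm]
    exact ⟨x, hux, ih hxv⟩

theorem hasWalk_iff_exists_seq {t : ℕ} {v w : V} :
    HasWalk E t v w ↔
      ∃ f : ℕ → V, f 0 = v ∧ f t = w ∧ ∀ i < t, E (f i) (f (i + 1)) := by
  induction t generalizing v with
  | zero =>
    exact ⟨fun h => ⟨fun _ => v, rfl, h, by simp⟩, fun ⟨f, hf0, hft, _⟩ => hf0 ▸ hft⟩
  | succ t ih =>
    constructor
    · rintro ⟨u, hvu, huw⟩
      obtain ⟨f, hf0, hft, hf⟩ := ih.1 huw
      refine ⟨fun i => Nat.casesOn i v f, rfl, hft, fun i hi => ?_⟩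
      cases i with
      | zero => simpa [hf0] using hvu
      | succ i => exact hf i (by omega)
    · rintro ⟨f, rfl, hft, hf⟩
      exact ⟨f 1, hf 0 (by omega),
        ih.2 ⟨fun i => f (i + 1), rfl, hft, fun i hi => hf (i + 1) (by omega)⟩⟩

/-- Strong induction on `T`: either `f` is injective on `[0, T)` and traces a cycle, or a
repetition `f a = f b` with `a < b < T` leaves the shorter closed sequence `f a, …, f b`. -/
theorem exists_hasCycleOfLength_of_closed_seq (T : ℕ) (hT : 1 ≤ T) (f : ℕ → V)
    (hclosed : f T = f 0) (harc : ∀ i < T, E (f i) (f (i + 1))) :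
    ∃ s, 1 ≤ s ∧ s ≤ T ∧ HasCycleOfLength E s := by
  induction T using Nat.strong_induction_on generalizing f with
  | _ T ih =>
    by_cases hinj : ∀ i j, i < T → j < T → f i = f j → i = j
    · refine ⟨T, hT, le_rfl, fun i => f i, fun a b hab => Fin.ext (hinj a b a.2 b.2 hab),
        fun t => ?_⟩
      rcases Nat.lt_or_ge (t + 1) T with h | h
      · simpa only [Nat.mod_eq_of_lt h] using harc t t.2
      · have hsucc : (t : ℕ) + 1 = T := by omega
        simpa only [hsucc, Nat.mod_self, hclosed] using harc t t.2
    · push Not at hinj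
      obtain ⟨i, j, hi, hj, hfij, hij⟩ := hinj
      obtain ⟨a, b, hab, hb, hfab⟩ : ∃ a b, a < b ∧ b < T ∧ f a = f b := by
        rcases Nat.lt_or_gt_of_ne hij with h | h
        · exact ⟨i, j, h, hj, hfij⟩
        · exact ⟨j, i, h, hi, hfij.symm⟩
      obtain ⟨s, hs, hsT, hcyc⟩ := ih (b - a) (by omega) (by omega) (fun m => f (a + m))
        (by simp [Nat.add_sub_cancel' hab.le, hfab]) (fun m hm => harc (a + m) (by omega))
      exact ⟨s, hs, by omega, hcyc⟩

theorem HasWalk.exists_hasCycleOfLength {T : ℕ} {v : V} (hT : 1 ≤ T) (hvv : HasWalk E T v v) :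
    ∃ s, 1 ≤ s ∧ s ≤ T ∧ HasCycleOfLength E s := by
  obtain ⟨f, hf0, hfT, harc⟩ := hasWalk_iff_exists_seq.1 hvv
  exact exists_hasCycleOfLength_of_closed_seq T hT f (hfT.trans hf0.symm) harc

theorem HasCycleOfLength.exists_hasWalk_self {s : ℕ} (hs : 1 ≤ s)
    (hcyc : HasCycleOfLength E s) :
    ∃ v, HasWalk E s v v := by
  obtain ⟨z, -, harc⟩ := hcyc
  let f : ℕ → V := fun i => z ⟨i % s, Nat.mod_lt _ hs⟩
  refine ⟨f 0, hasWalk_iff_exists_seq.2 ⟨f, rfl, by simp [f], fun i _ => ?_⟩⟩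
  simpa [f, Nat.add_mod] using harc ⟨i % s, Nat.mod_lt _ hs⟩

theorem HasWalk.of_digraphPower {n j : ℕ} {v w : V} (hvw : HasWalk (digraphPower E n) j v w) :
    ∃ T, j ≤ T ∧ T ≤ j * n ∧ HasWalk E T v w := by
  induction j generalizing v with
  | zero => exact ⟨0, le_rfl, by simp, hvw⟩
  | succ j ih =>
    obtain ⟨u, ⟨t, ht, htn, hvu⟩, huw⟩ := hvw
    obtain ⟨T, hjT, hTj, huw⟩ := ih huw
    exact ⟨t + T, by omega, by rw [Nat.succ_mul]; omega, hvu.append huw⟩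

theorem exists_hasCycleOfLength_of_digraphPower {n s : ℕ} (hs : 1 ≤ s)
    (hcyc : HasCycleOfLength (digraphPower E n) s) :
    ∃ s', 1 ≤ s' ∧ s' ≤ s * n ∧ HasCycleOfLength E s' := by
  obtain ⟨v, hvv⟩ := hcyc.exists_hasWalk_self hs
  obtain ⟨T, hsT, hTs, hvv⟩ := hvv.of_digraphPower
  obtain ⟨s', hs', hs'T, hcyc'⟩ := hvv.exists_hasCycleOfLength (hs.trans hsT)
  exact ⟨s', hs', hs'T.trans hTs, hcyc'⟩

theorem digraphPower.cons {n : ℕ} {x y w : V} (hxy : E x y) (hyw : digraphPower E n y w) :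
    digraphPower E (n + 1) x w := by
  obtain ⟨t, ht, htn, hyw⟩ := hyw
  exact ⟨t + 1, by omega, by omega, y, hxy, hyw⟩

theorem digraphPower.of_adj {n : ℕ} (hn : 1 ≤ n) {x v : V} (hxv : E x v) :
    digraphPower E n x v :=
  ⟨1, le_rfl, hn, v, hxv, rfl⟩

theorem exists_digraphPower_forall_mem [DecidableEq V]
    (hdom : ∀ S : Finset V, S.card ≤ 2 → ∃ x : V, ∀ v ∈ S, E x v)
    {n : ℕ} (hn : 1 ≤ n) (S : Finset V) (hS : S.card ≤ n + 1) :
    ∃ x, ∀ v ∈ S, digraphPower E n x v := by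
  induction n, hn using Nat.le_induction generalizing S with
  | base =>
    obtain ⟨x, hx⟩ := hdom S hS
    exact ⟨x, fun v hv => .of_adj le_rfl (hx v hv)⟩
  | succ n _ ih =>
    rcases S.eq_empty_or_nonempty with rfl | ⟨v, hv⟩
    · obtain ⟨x, -⟩ := ih ∅ (by simp)
      exact ⟨x, by simp⟩
    obtain ⟨x', hx'⟩ := ih (S.erase v) (by rw [card_erase_of_mem hv]; omega)
    obtain ⟨x, hx⟩ := hdom {x', v} card_le_two
    refine ⟨x, fun w hw => ?_⟩
    by_cases hwv : w = v
    · exact .of_adj (by omega) (hwv ▸ hx v (by simp))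
    · exact .cons (hx x' (by simp)) (hx' w (mem_erase.2 ⟨hwv, hw⟩))

end

theorem power_digraph_general (k l : ℕ) (hl : 2 ≤ l)
    (V : Type) (E' : V → V → Prop)
    (hgirth : ∀ s : ℕ, 1 ≤ s → HasCycleOfLength E' s → (k - 1) * (l - 1) + 1 ≤ s)
    (hdom : ∀ S : Finset V, S.card ≤ 2 → ∃ x : V, ∀ v ∈ S, E' x v) :
    (∀ s : ℕ, 1 ≤ s →
        HasCycleOfLength (fun v w => ∃ t, 1 ≤ t ∧ t ≤ l - 1 ∧ HasWalk E' t v w) s →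
        k ≤ s) ∧
    (∀ S : Finset V, S.card ≤ l →
        ∃ x : V, ∀ v ∈ S, ∃ t, 1 ≤ t ∧ t ≤ l - 1 ∧ HasWalk E' t x v) := by
  classical
  refine ⟨fun s hs hcyc => ?_,
    fun S hS => exists_digraphPower_forall_mem hdom (by omega) S (by omega)⟩
  obtain ⟨s', hs', hs's, hcyc'⟩ := exists_hasCycleOfLength_of_digraphPower (n := l - 1) hs hcyc
  have hgirth' := hgirth s' hs' hcyc'
  by_contra! hsk
  have : s * (l - 1) ≤ (k - 1) * (l - 1) := Nat.mul_le_mul_right _ (by omega)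
  omega

/-- Theorem 5 (power construction): if D' is a ((k-1)(l-1)+1, 2)-digraph then its
(l-1)-st power D is a (k,l)-digraph. -/
theorem power_digraph (k l : ℕ) (hk : 1 ≤ k) (hl : 2 ≤ l)
    (V : Type) [Fintype V] (E' : V → V → Prop)
    (hgirth : ∀ s : ℕ, 1 ≤ s → HasCycleOfLength E' s → (k - 1) * (l - 1) + 1 ≤ s)
    (hdom : ∀ S : Finset V, S.card ≤ 2 → ∃ x : V, ∀ v ∈ S, E' x v) :
    (∀ s : ℕ, 1 ≤ s →
        HasCycleOfLength (fun v w => ∃ t, 1 ≤ t ∧ t ≤ l - 1 ∧ HasWalk E' t v w) s →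
        k ≤ s) ∧
    (∀ S : Finset V, S.card ≤ l →
        ∃ x : V, ∀ v ∈ S, ∃ t, 1 ≤ t ∧ t ≤ l - 1 ∧ HasWalk E' t x v) :=
  power_digraph_general k l hl V E' hgirth hdom
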